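/- arXiv:1307.0579 — 5 statements merged into one kernel-verified Lean document; each statement's English description precedes it below -/
import Mathlib

section
/- If R ⊆ S ⊆ Γ(R,I) are subrings of the fraction field of a domain R, then Γ(R,I) = Γ(S, S·I), where S·I is the ideal of S generated by I. -/
/-!
For a nonzero `s` in a subring `S` of `K`, `x ∈ S[s⁻¹]` iff `x * s ^ n ∈ S` for some `n`. If
`x ∈ Γ(R,I)`, then every `r ∈ I` has a power in the conductor `(S : x) = {t ∈ S | t * x ∈ S}`, so
`S·I` lies in the radical of the conductor, whence `x ∈ S[s⁻¹]` for every nonzero `s ∈ S·I`.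
Conversely, for nonzero `r ∈ I` we have `S[r⁻¹] ⊆ R[r⁻¹]`, because `S ⊆ Γ(R,I) ⊆ R[r⁻¹]`.
-/

noncomputable section

def locAt (R K : Type) [CommRing R] [Field K] [Algebra R K] (r : R) : Subring K :=
  (Algebra.adjoin R {(algebraMap R K r)⁻¹}).toSubring

def Gamma (R K : Type) [CommRing R] [Field K] [Algebra R K] (I : Ideal R) : Set K :=
  ⋂ (r : R) (_ : r ∈ I) (_ : r ≠ 0), (locAt R K r : Set K)

/-- The ideal `S·I` of the subring `S ⊆ K` generated by (the image of) the ideal `I` of `R`. -/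
def idealOf (R K : Type) [CommRing R] [Field K] [Algebra R K] (S : Subring K) (I : Ideal R) :
    Ideal S :=
  Ideal.span {s : S | ∃ r ∈ I, (s : K) = algebraMap R K r}

/-- `Γ(S,J) = ⋂_{s ∈ J, s ≠ 0} S[s⁻¹]` for a subring `S` of `K` and an ideal `J` of `S`. -/
def GammaS (K : Type) [Field K] (S : Subring K) (J : Ideal S) : Set K :=
  ⋂ (s : S) (_ : s ∈ J) (_ : (s : K) ≠ 0),
    (Subring.closure ((S : Set K) ∪ {(s : K)⁻¹}) : Set K)

namespace Subring

variable {K : Type*} [Field K] {S : Subring K}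

theorem mem_closure_union_inv_iff {s x : K} (hs : s ∈ S) (hs0 : s ≠ 0) :
    x ∈ closure ((S : Set K) ∪ {s⁻¹}) ↔ ∃ n : ℕ, x * s ^ n ∈ S := by
  constructor
  · intro hx
    induction hx using closure_induction with
    | mem y hy =>
      rcases hy with hy | rfl
      · exact ⟨0, by simpa using hy⟩
      · exact ⟨1, by simp [hs0, one_mem]⟩
    | zero => exact ⟨0, by simp [zero_mem]⟩
    | one => exact ⟨0, by simp [one_mem]⟩
    | add y z _ _ hy hz =>
      obtain ⟨m, hm⟩ := hy
      obtain ⟨n, hn⟩ := hz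
      refine ⟨m + n, ?_⟩
      have hsum : (y + z) * s ^ (m + n) = y * s ^ m * s ^ n + z * s ^ n * s ^ m := by ring
      rw [hsum]
      exact add_mem (mul_mem hm (pow_mem hs n)) (mul_mem hn (pow_mem hs m))
    | neg y _ hy =>
      obtain ⟨n, hn⟩ := hy
      exact ⟨n, by simpa only [neg_mul] using neg_mem hn⟩
    | mul y z _ _ hy hz =>
      obtain ⟨m, hm⟩ := hy
      obtain ⟨n, hn⟩ := hz
      exact ⟨m + n, by rw [pow_add, mul_mul_mul_comm]; exact mul_mem hm hn⟩
  · rintro ⟨n, hn⟩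
    have hx : x = x * s ^ n * s⁻¹ ^ n := by
      rw [mul_assoc, ← mul_pow, mul_inv_cancel₀ hs0, one_pow, mul_one]
    have hs_inv : s⁻¹ ∈ closure ((S : Set K) ∪ {s⁻¹}) := subset_closure (Or.inr rfl)
    rw [hx]
    exact mul_mem (subset_closure (Or.inl hn)) (pow_mem hs_inv n)

theorem mem_one_colon_singleton {x : K} {t : S} :
    t ∈ (1 : Submodule S K).colon {x} ↔ (t : K) * x ∈ S := by
  simp [Submodule.mem_one, Algebra.algebraMap_ofSubsemiring_apply, Algebra.smul_def]

end Subring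

variable {R K : Type} [CommRing R] [Field K] [Algebra R K]

theorem mem_locAt_iff {r : R} (hr : algebraMap R K r ≠ 0) {x : K} :
    x ∈ locAt R K r ↔ ∃ n : ℕ, x * algebraMap R K r ^ n ∈ Set.range (algebraMap R K) := by
  rw [locAt, Subalgebra.mem_toSubring, ← Subalgebra.mem_toSubring, Algebra.adjoin_eq_ring_closure,
    ← RingHom.coe_range]
  exact Subring.mem_closure_union_inv_iff ⟨r, rfl⟩ hr

theorem mem_gamma_iff {I : Ideal R} {x : K} :
    x ∈ Gamma R K I ↔ ∀ r ∈ I, r ≠ 0 → x ∈ locAt R K r := by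
  simp [Gamma]

theorem mem_gammaS_iff {S : Subring K} {J : Ideal S} {x : K} :
    x ∈ GammaS K S J ↔ ∀ s ∈ J, (s : K) ≠ 0 → x ∈ Subring.closure ((S : Set K) ∪ {(s : K)⁻¹}) := by
  simp [GammaS]

theorem gamma_subset_gammaS (hinj : Function.Injective (algebraMap R K)) {I : Ideal R}
    {S : Subring K} (h1 : Set.range (algebraMap R K) ⊆ S) :
    Gamma R K I ⊆ GammaS K S (idealOf R K S I) := by
  intro x hx
  rw [mem_gammaS_iff]
  intro s hs hs0
  suffices s ∈ ((1 : Submodule S K).colon {x}).radical by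
    obtain ⟨n, hn⟩ := this
    refine (Subring.mem_closure_union_inv_iff s.2 hs0).2 ⟨n, ?_⟩
    simpa [mul_comm] using Subring.mem_one_colon_singleton.1 hn
  refine Ideal.span_le.2 ?_ hs
  rintro t ⟨r, hrI, hrt⟩
  rcases eq_or_ne r 0 with rfl | hr0
  · have ht : t = 0 := Subtype.ext (by simpa using hrt)
    exact ht ▸ zero_mem _
  · have hx' := mem_gamma_iff.1 hx r hrI hr0
    obtain ⟨n, hn⟩ := (mem_locAt_iff ((map_ne_zero_iff _ hinj).2 hr0)).1 hx'
    refine ⟨n, Subring.mem_one_colon_singleton.2 ?_⟩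
    simpa [hrt, mul_comm] using h1 hn

theorem gammaS_subset_gamma (hinj : Function.Injective (algebraMap R K)) {I : Ideal R}
    {S : Subring K} (h1 : Set.range (algebraMap R K) ⊆ S) (h2 : (S : Set K) ⊆ Gamma R K I) :
    GammaS K S (idealOf R K S I) ⊆ Gamma R K I := by
  intro x hx
  rw [mem_gamma_iff]
  intro r hrI hr0
  have hx' := mem_gammaS_iff.1 hx ⟨_, h1 ⟨r, rfl⟩⟩ (Ideal.subset_span ⟨r, hrI, rfl⟩)
    ((map_ne_zero_iff _ hinj).2 hr0)
  refine Subring.closure_le.2 (Set.union_subset (fun y hy ↦ ?_) ?_) hx'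
  · exact mem_gamma_iff.1 (h2 hy) r hrI hr0
  · exact Set.singleton_subset_iff.2 (Algebra.subset_adjoin rfl)

theorem gamma_eq_gamma_intermediate_general (R K : Type) [CommRing R] [Field K] [Algebra R K]
    [IsFractionRing R K] (I : Ideal R) (S : Subring K)
    (h1 : Set.range (algebraMap R K) ⊆ (S : Set K)) (h2 : (S : Set K) ⊆ Gamma R K I) :
    Gamma R K I = GammaS K S (idealOf R K S I) :=
  (gamma_subset_gammaS (IsFractionRing.injective R K) h1).antisymm
    (gammaS_subset_gamma (IsFractionRing.injective R K) h1 h2)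

/-- If `R ⊆ S ⊆ Γ(R,I)` are subrings of the fraction field of the domain `R`,
then `Γ(R,I) = Γ(S, S·I)`. -/
theorem gamma_eq_gamma_intermediate (R K : Type) [CommRing R] [IsDomain R] [Field K] [Algebra R K]
    [IsFractionRing R K] (I : Ideal R) (S : Subring K)
    (h1 : Set.range (algebraMap R K) ⊆ (S : Set K)) (h2 : (S : Set K) ⊆ Gamma R K I) :
    Gamma R K I = GammaS K S (idealOf R K S I) :=
  gamma_eq_gamma_intermediate_general R K I S h1 h2
end
end

section
/- Let S be a Noetherian domain, I an ideal of S, and suppose there exists an element g in the fraction field of S with g ∉ S but g·I ⊆ S and I ≠ 0. Then Ext¹_S(S/I, S) ≠ 0. -/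
/-!
Multiplication by `g` is an `S`-linear map `I → S`. Computing `Ext¹(S/I, -)` on a projective
resolution `P → S/I`, a linear map `f : I → Y` gives the `1`-cocycle `f ∘ α ∘ d₁` of `Hom(P, Y)`,
where `α : P₀ → S` lifts `P₀ → S/I`; if `Ext¹(S/I, Y) = 0` it is a coboundary, and this forces `f`
to be multiplication by an element of `Y`. For `f = g · -` and `Y = S`, cancelling a nonzero
element of `I` gives `g ∈ S`.
-/

open CategoryTheory

namespace CategoryTheory.ProjectiveResolution

variable {R : Type*} [Ring R] {C : Type*} [Category C] [Abelian C] [Linear R C]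
  [EnoughProjectives C] {X Y : C}

theorem exists_d_comp_eq_of_subsingleton_ext_one (P : ProjectiveResolution X)
    [Subsingleton (((Ext R C 1).obj (Opposite.op X)).obj Y)]
    (φ : P.complex.X 1 ⟶ Y) (hφ : P.complex.d 2 1 ≫ φ = 0) :
    ∃ ψ : P.complex.X 0 ⟶ Y, P.complex.d 1 0 ≫ ψ = φ := by
  have hzero : Limits.IsZero ((P.complex.linearYonedaObj R Y).homology 1) :=
    (ModuleCat.isZero_of_subsingleton _).of_iso (P.isoExt 1 Y).symm
  have hexact := ((P.complex.linearYonedaObj R Y).exactAt_iff' 0 1 2 (by simp) (by simp)).1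
    ((HomologicalComplex.exactAt_iff_isZero_homology _ _).2 hzero)
  exact (ShortComplex.moduleCat_exact_iff _).1 hexact φ hφ

end CategoryTheory.ProjectiveResolution

namespace Ideal

section Resolution

variable {R : Type*} [CommRing R] {I : Ideal R}
  (P : ProjectiveResolution (ModuleCat.of R (R ⧸ I))) {α : P.complex.X 0 ⟶ ModuleCat.of R R}

theorem apply_d_mem_of_comp_mkQ_eq (hα : α ≫ ModuleCat.ofHom I.mkQ = P.π.f 0)
    (x : P.complex.X 1) : α (P.complex.d 1 0 x) ∈ I := by
  rw [← Submodule.Quotient.mk_eq_zero]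
  exact ConcreteCategory.congr_hom
    ((Category.assoc _ _ _).trans (hα ▸ P.complex_d_comp_π_f_zero)) x

variable (hα : α ≫ ModuleCat.ofHom I.mkQ = P.π.f 0)

noncomputable def boundaryToIdeal : P.complex.X 1 →ₗ[R] I :=
  (α.hom ∘ₗ (P.complex.d 1 0).hom).codRestrict I (apply_d_mem_of_comp_mkQ_eq P hα)

theorem boundaryToIdeal_d_apply (x : P.complex.X 2) :
    boundaryToIdeal P hα (P.complex.d 2 1 x) = 0 := by
  have hdd : (P.complex.d 1 0).hom ((P.complex.d 2 1).hom x) = 0 := by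
    rw [← LinearMap.comp_apply, ← ModuleCat.hom_comp, P.complex.d_comp_d]
    rfl
  ext
  simp [boundaryToIdeal, hdd]

theorem smul_eq_of_d_comp_eq {Y : ModuleCat R} (f : I →ₗ[R] Y) {ψ : P.complex.X 0 ⟶ Y}
    (hψ : P.complex.d 1 0 ≫ ψ = ModuleCat.ofHom (f ∘ₗ boundaryToIdeal P hα))
    {p : P.complex.X 0} (hp : P.π.f 0 p = Submodule.Quotient.mk 1) (i : I) :
    (i : R) • ψ p = f ⟨i * α p, I.mul_mem_right _ i.2⟩ := by
  obtain ⟨x, hx⟩ : ∃ x, P.complex.d 1 0 x = (i : R) • p := by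
    refine (ShortComplex.moduleCat_exact_iff _).1 P.exact₀ _ ?_
    rw [map_smul, hp]
    show Submodule.Quotient.mk ((i : R) • 1) = (0 : R ⧸ I)
    rw [smul_eq_mul, mul_one, Submodule.Quotient.mk_eq_zero]
    exact i.2
  have hψx := ConcreteCategory.congr_hom hψ x
  simp only [ModuleCat.hom_comp, ModuleCat.hom_ofHom, LinearMap.comp_apply] at hψx
  rw [← map_smul, ← hx, hψx]
  congr 1
  ext
  simp [boundaryToIdeal, hx]

end Resolution

variable {R : Type*} [CommRing R] (I : Ideal R)

theorem exists_eq_smul_of_subsingleton_ext_one {Y : ModuleCat R}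
    [Subsingleton (((Ext R (ModuleCat R) 1).obj (Opposite.op (ModuleCat.of R (R ⧸ I)))).obj Y)]
    (f : I →ₗ[R] Y) : ∃ y : Y, ∀ i : I, f i = (i : R) • y := by
  let P := ProjectiveResolution.of (ModuleCat.of R (R ⧸ I))
  let q : ModuleCat.of R R ⟶ ModuleCat.of R (R ⧸ I) := ModuleCat.ofHom I.mkQ
  have : Epi q := (ModuleCat.epi_iff_surjective _).2 I.mkQ_surjective
  let π₀ : P.complex.X 0 ⟶ ModuleCat.of R (R ⧸ I) := P.π.f 0
  let α := Projective.factorThru π₀ q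
  have hα : α ≫ q = P.π.f 0 := Projective.factorThru_comp π₀ q
  obtain ⟨ψ, hψ⟩ := P.exists_d_comp_eq_of_subsingleton_ext_one (R := R)
    (ModuleCat.ofHom (f ∘ₗ boundaryToIdeal P hα)) (by ext; simp [boundaryToIdeal_d_apply])
  obtain ⟨p, hp⟩ := (ModuleCat.epi_iff_surjective (P.π.f 0)).1 inferInstance
    (Submodule.Quotient.mk 1)
  have hp1 : α p - 1 ∈ I := by
    rw [← Submodule.Quotient.eq]
    exact (ConcreteCategory.congr_hom hα p).trans hp
  refine ⟨ψ p - f ⟨α p - 1, hp1⟩, fun i => ?_⟩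
  rw [smul_sub, smul_eq_of_d_comp_eq P hα f hψ hp i, ← map_smul, ← map_sub]
  congr 1
  ext
  simp only [Submodule.coe_sub, SetLike.mk_smul_mk, smul_eq_mul]
  ring

variable {S K : Type*} [CommRing S] [Field K] [Algebra S K] [IsFractionRing S K] {I : Ideal S}
  {g : K} (hgI : ∀ i ∈ I, g * algebraMap S K i ∈ Set.range (algebraMap S K))

noncomputable def fractionalMul : I →ₗ[S] S :=
  (LinearEquiv.ofInjective (Algebra.linearMap S K) (IsFractionRing.injective S K)).symm ∘ₗ
    (LinearMap.mulLeft S g ∘ₗ Algebra.linearMap S K ∘ₗ I.subtype).codRestrict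
      (LinearMap.range (Algebra.linearMap S K)) fun i => hgI i i.2

theorem algebraMap_fractionalMul (i : I) :
    algebraMap S K (fractionalMul hgI i) = g * algebraMap S K i :=
  congrArg Subtype.val <|
    (LinearEquiv.ofInjective (Algebra.linearMap S K) (IsFractionRing.injective S K)).apply_symm_apply
      ⟨g * algebraMap S K i, hgI i i.2⟩

end Ideal

theorem ext_one_ne_zero_of_fractional_element_general (S : Type) [CommRing S]
    (K : Type) [Field K] [Algebra S K] [IsFractionRing S K]
    (I : Ideal S) (hI : I ≠ ⊥) (g : K) (hg : g ∉ Set.range (algebraMap S K))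
    (hgI : ∀ i ∈ I, g * algebraMap S K i ∈ Set.range (algebraMap S K)) :
    Nontrivial (((Ext S (ModuleCat S) 1).obj
      (Opposite.op (ModuleCat.of S (S ⧸ I)))).obj (ModuleCat.of S S)) := by
  by_contra hext
  have := not_nontrivial_iff_subsingleton.1 hext
  obtain ⟨y, hy⟩ :=
    I.exists_eq_smul_of_subsingleton_ext_one (Y := ModuleCat.of S S) (Ideal.fractionalMul hgI)
  obtain ⟨i, hiI, hi0⟩ := (Submodule.ne_bot_iff I).1 hI
  have hi : algebraMap S K i ≠ 0 := (map_ne_zero_iff _ (IsFractionRing.injective S K)).2 hi0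
  refine hg ⟨y, mul_right_cancel₀ hi ?_⟩
  calc algebraMap S K y * algebraMap S K i
      = algebraMap S K (Ideal.fractionalMul hgI ⟨i, hiI⟩) := by
        rw [hy, smul_eq_mul, map_mul, mul_comm]
    _ = g * algebraMap S K i := Ideal.algebraMap_fractionalMul hgI _

/-- Let `S` be a Noetherian domain with fraction field `K`, `I` a nonzero ideal, and `g ∈ K`
with `g ∉ S` but `g·I ⊆ S`. Then `Ext¹_S(S/I, S) ≠ 0`. -/
theorem ext_one_ne_zero_of_fractional_element (S : Type) [CommRing S] [IsDomain S]
    [IsNoetherianRing S] (K : Type) [Field K] [Algebra S K] [IsFractionRing S K]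
    (I : Ideal S) (hI : I ≠ ⊥) (g : K) (hg : g ∉ Set.range (algebraMap S K))
    (hgI : ∀ i ∈ I, g * algebraMap S K i ∈ Set.range (algebraMap S K)) :
    Nontrivial (((Ext S (ModuleCat S) 1).obj
      (Opposite.op (ModuleCat.of S (S ⧸ I)))).obj (ModuleCat.of S S)) :=
  ext_one_ne_zero_of_fractional_element_general S K I hI g hg hgI
end

section
/- Let S be a Noetherian normal domain and P a height-one prime ideal of S. Then Γ(S,P) ≠ S; that is, there exists an element of the fraction field of S not in S that lies in S[a⁻¹] for every a ∈ P. -/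
/-!
Pick a nonzero `a ∈ P`. Since `P` has height one it is a minimal prime of `(a)`, hence, `S` being
Noetherian, an associated prime of `S ⧸ (a)`: `P = ((a) : b)` for some `b`, and `b ∉ (a)` as
`P ≠ ⊤`. Then `b / a ∉ S`, while for every nonzero `c ∈ P` we have `c * b = a * d`, so
`b / a = d / c ∈ S[c⁻¹]`.
-/

noncomputable section

theorem algebraMap_div_mem_locAt {R K : Type} [CommRing R] [Field K] [Algebra R K] (d r : R) :
    algebraMap R K d / algebraMap R K r ∈ locAt R K r :=
  div_eq_mul_inv (algebraMap R K d) _ ▸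
    Subring.mul_mem _ (Subalgebra.algebraMap_mem _ d) (Algebra.subset_adjoin rfl)

theorem Ideal.mem_minimalPrimes_of_forall_lt_eq_bot {R : Type*} [CommSemiring R] {I P : Ideal R}
    [P.IsPrime] (hht : ∀ Q : Ideal R, Q.IsPrime → Q < P → Q = ⊥) (hIP : I ≤ P) (hI : I ≠ ⊥) :
    P ∈ I.minimalPrimes := by
  refine ⟨⟨‹_›, hIP⟩, fun Q ⟨hQ, hIQ⟩ hQP => ?_⟩
  by_contra hPQ
  exact hI (eq_bot_iff.mpr (hht Q hQ (lt_of_le_not_ge hQP hPQ) ▸ hIQ))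

theorem Ideal.exists_forall_mem_iff_dvd_mul_of_mem_minimalPrimes_span_singleton {R : Type*}
    [CommRing R] [IsNoetherianRing R] {P : Ideal R} {a : R}
    (hP : P ∈ (Ideal.span {a}).minimalPrimes) : ∃ b : R, ∀ c, c ∈ P ↔ a ∣ c * b := by
  have hcolon : (Ideal.span {a}).colon {1} = Ideal.span {a} := by
    ext c
    simp [Submodule.mem_colon_singleton]
  rw [← hcolon] at hP
  obtain ⟨b, rfl⟩ := Submodule.exists_eq_colon_of_mem_minimalPrimes hP
  exact ⟨b, fun c => by simp [Submodule.mem_colon_singleton, Ideal.mem_span_singleton]⟩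

theorem gamma_ne_self_of_height_one_general (S K : Type) [CommRing S] [IsNoetherianRing S]
    [Field K] [Algebra S K] [IsFractionRing S K]
    (P : Ideal S) (hP : P.IsPrime) (hP0 : P ≠ ⊥)
    (hht : ∀ Q : Ideal S, Q.IsPrime → Q < P → Q = ⊥) :
    ∃ x : K, x ∈ Gamma S K P ∧ x ∉ Set.range (algebraMap S K) := by
  obtain ⟨a, haP, ha0⟩ := Submodule.exists_mem_ne_zero_of_ne_bot hP0
  have hmin : P ∈ (Ideal.span {a}).minimalPrimes :=
    Ideal.mem_minimalPrimes_of_forall_lt_eq_bot hht ((Ideal.span_singleton_le_iff_mem P).mpr haP)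
      (Ideal.span_singleton_eq_bot.not.mpr ha0)
  obtain ⟨b, hb⟩ := Ideal.exists_forall_mem_iff_dvd_mul_of_mem_minimalPrimes_span_singleton hmin
  have hK {s : S} (hs : s ≠ 0) : algebraMap S K s ≠ 0 := IsFractionRing.to_map_eq_zero_iff.not.mpr hs
  refine ⟨algebraMap S K b / algebraMap S K a, ?_, ?_⟩
  · simp only [Gamma, Set.mem_iInter]
    intro c hc hc0
    obtain ⟨d, hd⟩ := (hb c).mp hc
    have hba : algebraMap S K b / algebraMap S K a = algebraMap S K d / algebraMap S K c := by
      rw [div_eq_div_iff (hK ha0) (hK hc0), ← map_mul, ← map_mul, mul_comm, hd, mul_comm]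
    exact hba ▸ algebraMap_div_mem_locAt d c
  · rintro ⟨u, hu⟩
    refine hP.ne_top ((Ideal.eq_top_iff_one P).mpr ((hb 1).mpr ⟨u, ?_⟩))
    rw [eq_div_iff (hK ha0), ← map_mul] at hu
    rw [one_mul, ← IsFractionRing.injective S K hu, mul_comm]

/-- If `S` is a Noetherian normal domain and `P` a height-one prime (nonzero, with no prime
strictly between `⊥` and `P`), then `Γ(S,P) ≠ S`: there is an element of the fraction field
not in `S` lying in `S[a⁻¹]` for every nonzero `a ∈ P`. -/
theorem gamma_ne_self_of_height_one (S K : Type) [CommRing S] [IsDomain S] [IsNoetherianRing S]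
    [IsIntegrallyClosed S] [Field K] [Algebra S K] [IsFractionRing S K]
    (P : Ideal S) (hP : P.IsPrime) (hP0 : P ≠ ⊥)
    (hht : ∀ Q : Ideal S, Q.IsPrime → Q < P → Q = ⊥) :
    ∃ x : K, x ∈ Gamma S K P ∧ x ∉ Set.range (algebraMap S K) :=
  gamma_ne_self_of_height_one_general S K P hP hP0 hht
end
end

section
/- In the ring S = ℤ[x₁,x₂,x₃,M]/(x₁x₂x₃M − x₁^a − x₂^a − x₃^a) with a ≥ 2, every prime ideal P containing the ideal D = (x₁x₂x₃, x₁'x₂x₃, x₁x₂'x₃, x₁x₂x₃') — where xᵢ' := (xⱼ^a + x_k^a)/xᵢ = x_jx_kM − xᵢ^a for {i,j,k} = {1,2,3} — contains one of the four prime ideals (x₁,x₂,x₃), (x₁, x₂^a + x₃^a, M), (x₂, x₁^a + x₃^a, M), (x₃, x₁^a + x₂^a, M). -/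
open MvPolynomial

noncomputable section

set_option maxHeartbeats 1000000
set_option synthInstance.maxHeartbeats 400000

/-- The polynomial `x₁x₂x₃M − x₁^a − x₂^a − x₃^a`. -/
def markovPoly (a : ℕ) : MvPolynomial (Fin 4) ℤ :=
  X 0 * X 1 * X 2 * X 3 - X 0 ^ a - X 1 ^ a - X 2 ^ a

/-- The images of the variables `x₁, x₂, x₃, M` in the quotient ring
`S = ℤ[x₁,x₂,x₃,M]/(x₁x₂x₃M − x₁^a − x₂^a − x₃^a)`. -/
def yv (a : ℕ) (i : Fin 4) : MvPolynomial (Fin 4) ℤ ⧸ Ideal.span {markovPoly a} :=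
  Ideal.Quotient.mk _ (X i)

/-- In `S = ℤ[x₁,x₂,x₃,M]/(x₁x₂x₃M − x₁^a − x₂^a − x₃^a)` with `a ≥ 2`, every prime ideal `P`
containing the deep ideal `D = (x₁x₂x₃, x₁'x₂x₃, x₁x₂'x₃, x₁x₂x₃')` — where
`xᵢ' = x_j x_k M − xᵢ^a` — contains one of the four ideals `(x₁,x₂,x₃)`,
`(x₁, x₂^a+x₃^a, M)`, `(x₂, x₁^a+x₃^a, M)`, `(x₃, x₁^a+x₂^a, M)`. -/
theorem markov_deep_ideal_primes (a : ℕ) (ha : 2 ≤ a)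
    (P : Ideal (MvPolynomial (Fin 4) ℤ ⧸ Ideal.span {markovPoly a})) (hP : P.IsPrime)
    (hDP : Ideal.span {yv a 0 * yv a 1 * yv a 2,
        (yv a 1 * yv a 2 * yv a 3 - yv a 0 ^ a) * yv a 1 * yv a 2,
        yv a 0 * (yv a 0 * yv a 2 * yv a 3 - yv a 1 ^ a) * yv a 2,
        yv a 0 * yv a 1 * (yv a 0 * yv a 1 * yv a 3 - yv a 2 ^ a)} ≤ P) :
    Ideal.span {yv a 0, yv a 1, yv a 2} ≤ P ∨
    Ideal.span {yv a 0, yv a 1 ^ a + yv a 2 ^ a, yv a 3} ≤ P ∨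
    Ideal.span {yv a 1, yv a 0 ^ a + yv a 2 ^ a, yv a 3} ≤ P ∨
    Ideal.span {yv a 2, yv a 0 ^ a + yv a 1 ^ a, yv a 3} ≤ P := by
  classical
  have hapos : 0 < a := lt_of_lt_of_le two_pos ha
  -- the defining relation in the quotient
  have hrel : yv a 0 * yv a 1 * yv a 2 * yv a 3 = yv a 0 ^ a + yv a 1 ^ a + yv a 2 ^ a := by
    have h0 : Ideal.Quotient.mk (Ideal.span {markovPoly a})
        (X 0 * X 1 * X 2 * X 3 - X 0 ^ a - X 1 ^ a - X 2 ^ a) = 0 :=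
      Ideal.Quotient.eq_zero_iff_mem.mpr (Ideal.subset_span rfl)
    rw [map_sub, map_sub, map_sub, map_mul, map_mul, map_mul, map_pow, map_pow, map_pow] at h0
    unfold yv
    linear_combination h0
  have span3 : ∀ u v w : MvPolynomial (Fin 4) ℤ ⧸ Ideal.span {markovPoly a},
      u ∈ P → v ∈ P → w ∈ P → Ideal.span {u, v, w} ≤ P := by
    intro u v w hu hv hw
    rw [Ideal.span_le]
    rintro x hx
    simp only [Set.mem_insert_iff, Set.mem_singleton_iff] at hx
    rcases hx with rfl | rfl | rfl <;> assumption
  have hg1 : yv a 0 * yv a 1 * yv a 2 ∈ P := hDP (Ideal.subset_span (by simp))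
  have hg2 : (yv a 1 * yv a 2 * yv a 3 - yv a 0 ^ a) * yv a 1 * yv a 2 ∈ P :=
    hDP (Ideal.subset_span (by simp))
  have hg3 : yv a 0 * (yv a 0 * yv a 2 * yv a 3 - yv a 1 ^ a) * yv a 2 ∈ P :=
    hDP (Ideal.subset_span (by simp))
  have hg4 : yv a 0 * yv a 1 * (yv a 0 * yv a 1 * yv a 3 - yv a 2 ^ a) ∈ P :=
    hDP (Ideal.subset_span (by simp))
  have tri : yv a 0 ∈ P ∨ yv a 1 ∈ P ∨ yv a 2 ∈ P := by
    rcases hP.mem_or_mem hg1 with h | h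
    · rcases hP.mem_or_mem h with h | h
      · exact Or.inl h
      · exact Or.inr (Or.inl h)
    · exact Or.inr (Or.inr h)
  rcases tri with h0 | h1 | h2
  · -- y0 ∈ P
    by_cases h1 : yv a 1 ∈ P
    · -- then y2^a ∈ P, hence y2 ∈ P
      have h2 : yv a 2 ∈ P := by
        refine hP.mem_of_pow_mem a ?_
        have e : yv a 2 ^ a = yv a 0 * yv a 1 * yv a 2 * yv a 3 - yv a 0 ^ a - yv a 1 ^ a := by
          linear_combination -hrel
        rw [e]
        exact sub_mem (sub_mem (P.mul_mem_right _ (P.mul_mem_right _ (P.mul_mem_right _ h0)))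
          (P.pow_mem_of_mem h0 a hapos)) (P.pow_mem_of_mem h1 a hapos)
      exact Or.inl (span3 _ _ _ h0 h1 h2)
    · by_cases h2 : yv a 2 ∈ P
      · have h1' : yv a 1 ∈ P := by
          refine hP.mem_of_pow_mem a ?_
          have e : yv a 1 ^ a = yv a 0 * yv a 1 * yv a 2 * yv a 3 - yv a 0 ^ a - yv a 2 ^ a := by
            linear_combination -hrel
          rw [e]
          exact sub_mem (sub_mem (P.mul_mem_right _ (P.mul_mem_right _ (P.mul_mem_right _ h0)))
            (P.pow_mem_of_mem h0 a hapos)) (P.pow_mem_of_mem h2 a hapos)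
        exact Or.inl (span3 _ _ _ h0 h1' h2)
      · -- y1, y2 ∉ P : use generator 2
        have hfac : yv a 1 * yv a 2 * yv a 3 - yv a 0 ^ a ∈ P := by
          rcases hP.mem_or_mem hg2 with h | h
          · rcases hP.mem_or_mem h with h | h
            · exact h
            · exact absurd h h1
          · exact absurd h h2
        have h123 : yv a 1 * yv a 2 * yv a 3 ∈ P := by
          have : yv a 1 * yv a 2 * yv a 3 =
              (yv a 1 * yv a 2 * yv a 3 - yv a 0 ^ a) + yv a 0 ^ a := by ring
          rw [this]
          exact add_mem hfac (P.pow_mem_of_mem h0 a hapos)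
        have h3 : yv a 3 ∈ P := by
          rcases hP.mem_or_mem h123 with h | h
          · rcases hP.mem_or_mem h with h | h
            · exact absurd h h1
            · exact absurd h h2
          · exact h
        have hsum : yv a 1 ^ a + yv a 2 ^ a ∈ P := by
          have e : yv a 1 ^ a + yv a 2 ^ a =
              yv a 0 * yv a 1 * yv a 2 * yv a 3 - yv a 0 ^ a := by
            linear_combination -hrel
          rw [e]
          exact sub_mem (P.mul_mem_right _ (P.mul_mem_right _ (P.mul_mem_right _ h0)))
            (P.pow_mem_of_mem h0 a hapos)
        exact Or.inr (Or.inl (span3 _ _ _ h0 hsum h3))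
  · -- y1 ∈ P
    by_cases h0 : yv a 0 ∈ P
    · have h2 : yv a 2 ∈ P := by
        refine hP.mem_of_pow_mem a ?_
        have e : yv a 2 ^ a = yv a 0 * yv a 1 * yv a 2 * yv a 3 - yv a 0 ^ a - yv a 1 ^ a := by
          linear_combination -hrel
        rw [e]
        exact sub_mem (sub_mem (P.mul_mem_right _ (P.mul_mem_right _ (P.mul_mem_right _ h0)))
          (P.pow_mem_of_mem h0 a hapos)) (P.pow_mem_of_mem h1 a hapos)
      exact Or.inl (span3 _ _ _ h0 h1 h2)
    · by_cases h2 : yv a 2 ∈ P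
      · have h0' : yv a 0 ∈ P := by
          refine hP.mem_of_pow_mem a ?_
          have e : yv a 0 ^ a = yv a 0 * yv a 1 * yv a 2 * yv a 3 - yv a 1 ^ a - yv a 2 ^ a := by
            linear_combination -hrel
          rw [e]
          exact sub_mem (sub_mem (P.mul_mem_right _ (P.mul_mem_right _
            (P.mul_mem_left _ h1))) (P.pow_mem_of_mem h1 a hapos))
            (P.pow_mem_of_mem h2 a hapos)
        exact Or.inl (span3 _ _ _ h0' h1 h2)
      · -- y0, y2 ∉ P : use generator 3
        have hfac : yv a 0 * yv a 2 * yv a 3 - yv a 1 ^ a ∈ P := by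
          rcases hP.mem_or_mem hg3 with h | h
          · rcases hP.mem_or_mem h with h | h
            · exact absurd h h0
            · exact h
          · exact absurd h h2
        have h023 : yv a 0 * yv a 2 * yv a 3 ∈ P := by
          have e : yv a 0 * yv a 2 * yv a 3 =
              (yv a 0 * yv a 2 * yv a 3 - yv a 1 ^ a) + yv a 1 ^ a := by ring
          rw [e]
          exact add_mem hfac (P.pow_mem_of_mem h1 a hapos)
        have h3 : yv a 3 ∈ P := by
          rcases hP.mem_or_mem h023 with h | h
          · rcases hP.mem_or_mem h with h | h
            · exact absurd h h0
            · exact absurd h h2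
          · exact h
        have hsum : yv a 0 ^ a + yv a 2 ^ a ∈ P := by
          have e : yv a 0 ^ a + yv a 2 ^ a =
              yv a 0 * yv a 1 * yv a 2 * yv a 3 - yv a 1 ^ a := by
            linear_combination -hrel
          rw [e]
          exact sub_mem (P.mul_mem_right _ (P.mul_mem_right _ (P.mul_mem_left _ h1)))
            (P.pow_mem_of_mem h1 a hapos)
        exact Or.inr (Or.inr (Or.inl (span3 _ _ _ h1 hsum h3)))
  · -- y2 ∈ P
    by_cases h0 : yv a 0 ∈ P
    · have h1 : yv a 1 ∈ P := by
        refine hP.mem_of_pow_mem a ?_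
        have e : yv a 1 ^ a = yv a 0 * yv a 1 * yv a 2 * yv a 3 - yv a 0 ^ a - yv a 2 ^ a := by
          linear_combination -hrel
        rw [e]
        exact sub_mem (sub_mem (P.mul_mem_right _ (P.mul_mem_right _ (P.mul_mem_right _ h0)))
          (P.pow_mem_of_mem h0 a hapos)) (P.pow_mem_of_mem h2 a hapos)
      exact Or.inl (span3 _ _ _ h0 h1 h2)
    · by_cases h1 : yv a 1 ∈ P
      · have h0' : yv a 0 ∈ P := by
          refine hP.mem_of_pow_mem a ?_
          have e : yv a 0 ^ a = yv a 0 * yv a 1 * yv a 2 * yv a 3 - yv a 1 ^ a - yv a 2 ^ a := by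
            linear_combination -hrel
          rw [e]
          exact sub_mem (sub_mem (P.mul_mem_right _ (P.mul_mem_right _
            (P.mul_mem_left _ h1))) (P.pow_mem_of_mem h1 a hapos))
            (P.pow_mem_of_mem h2 a hapos)
        exact Or.inl (span3 _ _ _ h0' h1 h2)
      · -- y0, y1 ∉ P : use generator 4
        have hfac : yv a 0 * yv a 1 * yv a 3 - yv a 2 ^ a ∈ P := by
          rcases hP.mem_or_mem hg4 with h | h
          · rcases hP.mem_or_mem h with h | h
            · exact absurd h h0
            · exact absurd h h1
          · exact h
        have h013 : yv a 0 * yv a 1 * yv a 3 ∈ P := by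
          have e : yv a 0 * yv a 1 * yv a 3 =
              (yv a 0 * yv a 1 * yv a 3 - yv a 2 ^ a) + yv a 2 ^ a := by ring
          rw [e]
          exact add_mem hfac (P.pow_mem_of_mem h2 a hapos)
        have h3 : yv a 3 ∈ P := by
          rcases hP.mem_or_mem h013 with h | h
          · rcases hP.mem_or_mem h with h | h
            · exact absurd h h0
            · exact absurd h h1
          · exact h
        have hsum : yv a 0 ^ a + yv a 1 ^ a ∈ P := by
          have e : yv a 0 ^ a + yv a 1 ^ a =
              yv a 0 * yv a 1 * yv a 2 * yv a 3 - yv a 2 ^ a := by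
            linear_combination -hrel
          rw [e]
          exact sub_mem (P.mul_mem_right _ (P.mul_mem_left _ h2))
            (P.pow_mem_of_mem h2 a hapos)
        exact Or.inr (Or.inr (Or.inr (span3 _ _ _ h2 hsum h3)))
end
end

section
/- In the polynomial ring ℤ[x₁,x₂,x₃,M] modulo (x₁x₂x₃M − x₁^a − x₂^a − x₃^a) with a ≥ 2, the pairs {x₁, x₂}, {x₁, M}, {x₂, M}, {x₃, M} each form regular sequences; consequently, the ideal D generated by x₁x₂x₃ and the three products x₁'x₂x₃, x₁x₂'x₃, x₁x₂x₃' (with xᵢ' as in the exchange relations) has codimension at least 2. -/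
/-!
Substituting `0` for one variable `x_i` of `f = x₁x₂x₃M − x₁^a − x₂^a − x₃^a` (here `M` counts as
a variable too) leaves a polynomial that no other variable `x_j` divides: it does not vanish at
the point where `x_i = x_j = 0` and all other coordinates are `1`. Since `g ∈ (f, x_i)` iff
`f(x_i = 0)` divides `g(x_i = 0)`, the prime `x_j` is a nonzerodivisor modulo `(f, x_i)`.
Likewise no variable divides `f`, so any two distinct variables form a regular sequence on
`S = ℤ[x₁,x₂,x₃,M]/(f)`.

A prime `P ⊇ D` contains one of `x₁, x₂, x₃`, say `x_k`, and then the exchange relation yields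
`(x_l x_m)² M ∈ P` for the other two indices, so `P` contains two distinct variables `x, y`.
Take `Q₁` minimal over `(x)` inside `P` and `Q₀` a minimal prime inside `Q₁`. Elements of
minimal primes are zero divisors, so `x ∉ Q₀` and `y ∉ Q₁`, giving `Q₀ < Q₁ < P`.
-/

open MvPolynomial

noncomputable section

open Pointwise

section CommRing

variable {R : Type*} [CommRing R]

lemma Ideal.singleton_smul_top (x : R) : x • (⊤ : Submodule R R) = Ideal.span {x} := by
  rw [← Submodule.ideal_span_singleton_smul, smul_eq_mul, Ideal.mul_top]

lemma isSMulRegular_quotSMulTop_iff {x y : R} :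
    IsSMulRegular (QuotSMulTop x R) y ↔ ∀ z, y * z ∈ Ideal.span {x} → z ∈ Ideal.span {x} := by
  rw [isSMulRegular_quotient_iff_mem_of_smul_mem, Ideal.singleton_smul_top]
  rfl

lemma Ideal.Quotient.mk_mem_span_singleton_iff {q x g : R} :
    Ideal.Quotient.mk (Ideal.span {q}) g ∈ Ideal.span {Ideal.Quotient.mk _ x} ↔
      g ∈ Ideal.span {q, x} := by
  rw [← Ideal.mem_comap, ← Set.image_singleton, ← Ideal.map_span,
    Ideal.comap_map_of_surjective' _ Ideal.Quotient.mk_surjective, Ideal.mk_ker,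
    Ideal.span_insert, sup_comm]

lemma dvd_of_dvd_mul_of_prime_of_not_dvd [IsDomain R] {p q g : R} (hp : Prime p)
    (hpq : ¬ p ∣ q) (h : q ∣ p * g) : q ∣ g := by
  obtain ⟨c, hc⟩ := h
  obtain ⟨d, rfl⟩ := (hp.dvd_or_dvd ⟨g, hc.symm⟩).resolve_left hpq
  exact ⟨d, mul_left_cancel₀ hp.ne_zero (by rw [hc]; ring)⟩

lemma isSMulRegular_mk_of_prime_of_not_dvd [IsDomain R] {p q : R} (hp : Prime p)
    (hpq : ¬ p ∣ q) :
    IsSMulRegular (R ⧸ Ideal.span {q}) (Ideal.Quotient.mk (Ideal.span {q}) p) := by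
  refine isSMulRegular_iff_right_eq_zero_of_smul.mpr fun m hm ↦ ?_
  obtain ⟨g, rfl⟩ := Ideal.Quotient.mk_surjective m
  rw [smul_eq_mul, ← map_mul, Ideal.Quotient.eq_zero_iff_mem, Ideal.mem_span_singleton] at hm
  rw [Ideal.Quotient.eq_zero_iff_mem, Ideal.mem_span_singleton]
  exact dvd_of_dvd_mul_of_prime_of_not_dvd hp hpq hm

namespace RingTheory.Sequence

lemma isRegular_pair_of_mul_mem {x y : R} (hx : IsSMulRegular R x)
    (hy : ∀ z, y * z ∈ Ideal.span {x} → z ∈ Ideal.span {x}) (hxy : Ideal.span {x, y} ≠ ⊤) :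
    IsRegular R [x, y] := by
  refine ⟨.cons hx (.cons (isSMulRegular_quotSMulTop_iff.mpr hy) (.nil _ _)), ?_⟩
  rwa [Ideal.ofList_cons, Ideal.ofList_singleton, ← Ideal.span_insert, smul_eq_mul,
    Ideal.mul_top, ne_comm]

theorem IsWeaklyRegular.exists_isPrime_chain {x y : R} (h : IsWeaklyRegular R [x, y])
    {P : Ideal R} [P.IsPrime] (hx : x ∈ P) (hy : y ∈ P) :
    ∃ Q₀ Q₁ : Ideal R, Q₀.IsPrime ∧ Q₁.IsPrime ∧ Q₀ < Q₁ ∧ Q₁ < P := by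
  obtain ⟨hx_reg, hy_reg, -⟩ := by simpa only [isWeaklyRegular_cons_iff] using h
  obtain ⟨Q₁, hQ₁, hQ₁P⟩ :=
    Ideal.exists_minimalPrimes_le ((Ideal.span_singleton_le_iff_mem _).mpr hx)
  have := hQ₁.isPrime
  obtain ⟨Q₀, hQ₀, hQ₀Q₁⟩ := Ideal.exists_minimalPrimes_le (bot_le : ⊥ ≤ Q₁)
  have hxQ₀ : x ∉ Q₀ := hx_reg.notMem_of_mem_minimalPrimes <| by
    rwa [Module.annihilator_eq_bot.mpr inferInstance]
  have hyQ₁ : y ∉ Q₁ := hy_reg.notMem_of_mem_minimalPrimes <| by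
    rwa [Ideal.annihilator_quotient, Ideal.singleton_smul_top]
  exact ⟨Q₀, Q₁, hQ₀.isPrime, hQ₁.isPrime,
    SetLike.lt_iff_le_and_exists.mpr ⟨hQ₀Q₁, x, hQ₁.le (Ideal.mem_span_singleton_self x), hxQ₀⟩,
    SetLike.lt_iff_le_and_exists.mpr ⟨hQ₁P, y, hy, hyQ₁⟩⟩

end RingTheory.Sequence

lemma Ideal.IsPrime.mem_or_mem_or_mem_of_mul_sub_pow {P : Ideal R} (hP : P.IsPrime) {a : ℕ}
    (ha : a ≠ 0) {u v w m : R} (hu : u ∈ P) (h : (v * w * m - u ^ a) * v * w ∈ P) :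
    m ∈ P ∨ v ∈ P ∨ w ∈ P := by
  have hm : m * ((v * w) * (v * w)) ∈ P := by
    convert P.add_mem h (P.mul_mem_left (v * w) (P.pow_mem_of_mem hu a (Nat.pos_of_ne_zero ha)))
      using 1
    ring
  rcases hP.mem_or_mem hm with hm | hvw
  · exact .inl hm
  · exact .inr (hP.mem_or_mem ((hP.mem_or_mem hvw).elim id id))

lemma Ideal.IsPrime.exists_ne_mem_of_exchange_span_le {P : Ideal R} (hP : P.IsPrime) {a : ℕ}
    (ha : a ≠ 0) (x : Fin 4 → R)
    (hD : Ideal.span {x 0 * x 1 * x 2,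
        (x 1 * x 2 * x 3 - x 0 ^ a) * x 1 * x 2,
        x 0 * (x 0 * x 2 * x 3 - x 1 ^ a) * x 2,
        x 0 * x 1 * (x 0 * x 1 * x 3 - x 2 ^ a)} ≤ P) :
    ∃ i j, i ≠ j ∧ x i ∈ P ∧ x j ∈ P := by
  simp only [Ideal.span_le, Set.insert_subset_iff, Set.singleton_subset_iff,
    SetLike.mem_coe] at hD
  obtain ⟨h012, h0, h1, h2⟩ := hD
  rw [mul_comm (x 0)] at h1
  rw [mul_comm, ← mul_assoc] at h2
  rcases hP.mem_or_mem h012 with h01 | hx2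
  · rcases hP.mem_or_mem h01 with hx0 | hx1
    · obtain hx3 | hx1 | hx2 := hP.mem_or_mem_or_mem_of_mul_sub_pow ha hx0 h0
      exacts [⟨0, 3, by decide, hx0, hx3⟩, ⟨0, 1, by decide, hx0, hx1⟩,
        ⟨0, 2, by decide, hx0, hx2⟩]
    · obtain hx3 | hx0 | hx2 := hP.mem_or_mem_or_mem_of_mul_sub_pow ha hx1 h1
      exacts [⟨1, 3, by decide, hx1, hx3⟩, ⟨1, 0, by decide, hx1, hx0⟩,
        ⟨1, 2, by decide, hx1, hx2⟩]
  · obtain hx3 | hx0 | hx1 := hP.mem_or_mem_or_mem_of_mul_sub_pow ha hx2 h2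
    exacts [⟨2, 3, by decide, hx2, hx3⟩, ⟨2, 0, by decide, hx2, hx0⟩,
      ⟨2, 1, by decide, hx2, hx1⟩]

end CommRing

namespace MvPolynomial

variable {σ R : Type*} [CommRing R]

lemma not_X_dvd_of_eval_ne_zero {i : σ} {p : MvPolynomial σ R} {v : σ → R} (hv : v i = 0)
    (h : eval v p ≠ 0) : ¬ X i ∣ p := fun hdvd ↦
  h <| zero_dvd_iff.mp (by simpa [hv] using map_dvd (eval v) hdvd)

variable [DecidableEq σ]

def killX (i : σ) : MvPolynomial σ R →ₐ[R] MvPolynomial σ R :=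
  aeval (Function.update X i 0)

@[simp] lemma killX_X_self (i : σ) : killX i (X i : MvPolynomial σ R) = 0 := by
  simp [killX]

lemma killX_X_of_ne {i j : σ} (h : j ≠ i) : killX i (X j : MvPolynomial σ R) = X j := by
  simp [killX, h]

lemma X_dvd_sub_killX (i : σ) (p : MvPolynomial σ R) : X i ∣ p - killX i p := by
  induction p using MvPolynomial.induction_on with
  | C r => simp [killX]
  | add p q hp hq => simpa [add_sub_add_comm] using dvd_add hp hq
  | mul_X p j hp =>
    obtain rfl | hj := eq_or_ne j i
    · simp
    · rw [map_mul, killX_X_of_ne hj, ← sub_mul]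
      exact dvd_mul_of_dvd_left hp _

lemma eval_killX (v : σ → R) (i : σ) (p : MvPolynomial σ R) :
    eval v (killX i p) = eval (Function.update v i 0) p := by
  induction p using MvPolynomial.induction_on with
  | C r => simp [killX]
  | add p q hp hq => simp [hp, hq]
  | mul_X p j hp =>
    obtain rfl | hj := eq_or_ne j i
    · simp
    · simp [hp, killX_X_of_ne hj, hj]

lemma mem_span_pair_X_iff_killX_dvd {i : σ} {p q : MvPolynomial σ R} :
    p ∈ Ideal.span {q, X i} ↔ killX i q ∣ killX i p := by
  rw [Ideal.mem_span_pair]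
  constructor
  · rintro ⟨b, c, rfl⟩
    exact ⟨killX i b, by simp [mul_comm]⟩
  · rintro ⟨c, hc⟩
    obtain ⟨s, hs⟩ := X_dvd_sub_killX i p
    obtain ⟨t, ht⟩ := X_dvd_sub_killX i q
    exact ⟨c, s - t * c, by linear_combination (-1 : MvPolynomial σ R) * hs + c * ht - hc⟩

lemma mem_span_pair_X_of_X_mul_mem [IsDomain R] {i j : σ} (hji : j ≠ i)
    {q g : MvPolynomial σ R} (hq : ¬ X j ∣ killX i q) (h : X j * g ∈ Ideal.span {q, X i}) :
    g ∈ Ideal.span {q, X i} := by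
  rw [mem_span_pair_X_iff_killX_dvd, map_mul, killX_X_of_ne hji] at h
  exact mem_span_pair_X_iff_killX_dvd.mpr (dvd_of_dvd_mul_of_prime_of_not_dvd X_prime hq h)

end MvPolynomial

section Markov

variable {a : ℕ}

local notation "𝒮" => MvPolynomial (Fin 4) ℤ ⧸ Ideal.span {markovPoly a}

lemma eval_markovPoly_ne_zero (ha : a ≠ 0) (i j : Fin 4) :
    eval (Function.update (Function.update 1 i 0) j 0) (markovPoly a) ≠ 0 := by
  fin_cases i <;> fin_cases j <;> simp [markovPoly, Function.update, zero_pow ha]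

lemma isSMulRegular_yv (ha : a ≠ 0) (i : Fin 4) : IsSMulRegular 𝒮 (yv a i) :=
  isSMulRegular_mk_of_prime_of_not_dvd X_prime
    (not_X_dvd_of_eval_ne_zero (by simp) (eval_markovPoly_ne_zero ha i i))

lemma mem_span_yv_of_yv_mul_mem (ha : a ≠ 0) {i j : Fin 4} (hji : j ≠ i) {g : 𝒮}
    (h : yv a j * g ∈ Ideal.span {yv a i}) : g ∈ Ideal.span {yv a i} := by
  obtain ⟨g, rfl⟩ := Ideal.Quotient.mk_surjective g
  unfold yv at h ⊢
  rw [← map_mul, Ideal.Quotient.mk_mem_span_singleton_iff] at h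
  rw [Ideal.Quotient.mk_mem_span_singleton_iff]
  refine mem_span_pair_X_of_X_mul_mem hji (not_X_dvd_of_eval_ne_zero (v := Function.update 1 j 0)
    (by simp) ?_) h
  rw [eval_killX]
  exact eval_markovPoly_ne_zero ha j i

lemma span_yv_pair_ne_top (ha : a ≠ 0) (i j : Fin 4) : Ideal.span {yv a i, yv a j} ≠ ⊤ := by
  let φ : 𝒮 →+* ℤ := Ideal.Quotient.lift _ constantCoeff fun g hg ↦ by
    obtain ⟨c, rfl⟩ := Ideal.mem_span_singleton.mp hg
    simp [markovPoly, zero_pow ha]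
  refine ne_top_of_le_ne_top (RingHom.ker_ne_top φ) (Ideal.span_le.mpr ?_)
  rintro _ (rfl | rfl) <;> simp [φ, yv]

theorem isRegular_yv_pair (ha : a ≠ 0) {i j : Fin 4} (hij : i ≠ j) :
    RingTheory.Sequence.IsRegular 𝒮 [yv a i, yv a j] :=
  RingTheory.Sequence.isRegular_pair_of_mul_mem (isSMulRegular_yv ha i)
    (fun _ ↦ mem_span_yv_of_yv_mul_mem ha hij.symm) (span_yv_pair_ne_top ha i j)

end Markov

/-- In `S = ℤ[x₁,x₂,x₃,M]/(x₁x₂x₃M − x₁^a − x₂^a − x₃^a)` with `a ≥ 2`, the pairs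
`{x₁,x₂}`, `{x₁,M}`, `{x₂,M}`, `{x₃,M}` are regular sequences, and consequently the deep
ideal `D = (x₁x₂x₃, x₁'x₂x₃, x₁x₂'x₃, x₁x₂x₃')` has codimension at least 2: every prime
containing `D` admits a chain of primes `Q₀ < Q₁` strictly below it. -/
theorem markov_regular_sequences_codim (a : ℕ) (ha : 2 ≤ a) :
    RingTheory.Sequence.IsRegular (MvPolynomial (Fin 4) ℤ ⧸ Ideal.span {markovPoly a})
      [yv a 0, yv a 1] ∧
    RingTheory.Sequence.IsRegular (MvPolynomial (Fin 4) ℤ ⧸ Ideal.span {markovPoly a})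
      [yv a 0, yv a 3] ∧
    RingTheory.Sequence.IsRegular (MvPolynomial (Fin 4) ℤ ⧸ Ideal.span {markovPoly a})
      [yv a 1, yv a 3] ∧
    RingTheory.Sequence.IsRegular (MvPolynomial (Fin 4) ℤ ⧸ Ideal.span {markovPoly a})
      [yv a 2, yv a 3] ∧
    (∀ P : Ideal (MvPolynomial (Fin 4) ℤ ⧸ Ideal.span {markovPoly a}), P.IsPrime →
      Ideal.span {yv a 0 * yv a 1 * yv a 2,
        (yv a 1 * yv a 2 * yv a 3 - yv a 0 ^ a) * yv a 1 * yv a 2,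
        yv a 0 * (yv a 0 * yv a 2 * yv a 3 - yv a 1 ^ a) * yv a 2,
        yv a 0 * yv a 1 * (yv a 0 * yv a 1 * yv a 3 - yv a 2 ^ a)} ≤ P →
      ∃ Q0 Q1 : Ideal (MvPolynomial (Fin 4) ℤ ⧸ Ideal.span {markovPoly a}),
        Q0.IsPrime ∧ Q1.IsPrime ∧ Q0 < Q1 ∧ Q1 < P) := by
  have ha₀ : a ≠ 0 := by omega
  refine ⟨isRegular_yv_pair ha₀ (by decide), isRegular_yv_pair ha₀ (by decide),
    isRegular_yv_pair ha₀ (by decide), isRegular_yv_pair ha₀ (by decide), fun P hP hD ↦ ?_⟩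
  obtain ⟨i, j, hij, hi, hj⟩ := hP.exists_ne_mem_of_exchange_span_le ha₀ (yv a) hD
  exact (isRegular_yv_pair ha₀ hij).toIsWeaklyRegular.exists_isPrime_chain hi hj
end
end
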